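/- (Theorem 3, L¹ lower bound) Let p ≥ 0 be an integer. There exist constants C₁ > 0 and C₁₂ > 0, depending only on p (independent of h, u and u^R), with the following property. Let a < b, N a positive integer, h = (b−a)/N, x_i = a + i h. Let u : [a,b] → ℝ be (p+1)-times continuously differentiable, and let u^R : (a,b) → ℝ coincide on each cell (x_i, x_{i+1}) with a polynomial of degree at most p. For 1 ≤ i ≤ N−1 and 0 ≤ k ≤ p set J^k_i = (d^k/dx^k)u^R(x_i⁺) − (d^k/dx^k)u^R(x_i⁻) and D^k_i = J^k_i / h^{p+1−k}. Then ∫_a^b |u − u^R| ≥ h^{p+1} [ C₁₂ Σ_{i=1}^{N−1} h · √(Q(D^0_i, …, D^p_i)) − C₁ ∫_a^b |u^{(p+1)}(x)| dx ]. -/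

import Mathlib

open MeasureTheory Polynomial

/-- `fd p d ξ = (1/2) Σ_{k=0}^p (d_k/k!) ξ^k`. -/
noncomputable def fd (p : ℕ) (d : Fin (p+1) → ℝ) (ξ : ℝ) : ℝ :=
  (1/2) * ∑ k : Fin (p+1), d k / (Nat.factorial k) * ξ ^ (k : ℕ)

/-- The error functional whose infimum over polynomials of degree ≤ p defines `Qform`. -/
noncomputable def Qerr (p : ℕ) (d : Fin (p+1) → ℝ) (v : Polynomial ℝ) : ℝ :=
  (∫ ξ in (-(1:ℝ)/2)..0, (v.eval ξ + fd p d ξ)^2) +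
  (∫ ξ in (0:ℝ)..(1/2), (v.eval ξ - fd p d ξ)^2)

/-- `Q(d) = inf_{v ∈ P} Qerr p d v`. -/
noncomputable def Qform (p : ℕ) (d : Fin (p+1) → ℝ) : ℝ :=
  sInf {q : ℝ | ∃ v : Polynomial ℝ, v.natDegree ≤ p ∧ q = Qerr p d v}

/-- The scaled jump vector `(D⁰,…,Dᵖ)` at a node `xi`, where `ql`/`qr` are the
polynomial pieces to the left/right of `xi`:
`Dᵏ = ((d^k/dx^k) qr(xi) - (d^k/dx^k) ql(xi)) / h^{p+1-k}`. -/
noncomputable def Dvec (p : ℕ) (h xi : ℝ) (ql qr : Polynomial ℝ) : Fin (p+1) → ℝ :=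
  fun k => ((Polynomial.derivative^[(k:ℕ)] qr).eval xi -
            (Polynomial.derivative^[(k:ℕ)] ql).eval xi) / h^(p+1-(k:ℕ))

/-!
Near an interior node `xᵢ` let `T` be the degree-`p` Taylor polynomial of `u`. On the window
`[xᵢ - h/2, xᵢ + h/2]` the integral form of the remainder gives `|u - T| ≤ hᵖ/p! · ∫_window |u⁽ᵖ⁺¹⁾|`,
so the sum of `∫ |q_{i-1} - T|` over the left half-window and `∫ |qᵢ - T|` over the right one is at
most `∫_window |u - uᴿ| + h^{p+1}/p! · ∫_window |u⁽ᵖ⁺¹⁾|`.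
Rescaling the window to `[-1/2, 1/2]` and dividing by `h^{p+1}` turns `q_{i-1} - T` and `qᵢ - T`
into polynomials `w_l`, `w_r` with `f_{Dᵢ} = (w_r - w_l)/2`, so `v = -(w_l + w_r)/2` is a competitor
in the infimum defining `Q(Dᵢ)`, and `√Q(Dᵢ)` is at most the sum of the `L²` norms of `w_l`, `w_r`.
On the finite-dimensional space of polynomials of degree `≤ p` these are bounded by `K` times the
`L¹` norms, which rescale back to the half-window integrals above. Summing over the disjoint windows
gives the theorem with `C₁₂ = 1/K` and `C₁ = 1/p!`.
-/

open Set Filter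
open scoped Nat

theorem exists_le_mul_of_posHomogeneous {E : Type*} [NormedAddCommGroup E] [NormedSpace ℝ E]
    [FiniteDimensional ℝ E] {F G : E → ℝ} (hF : Continuous F) (hG : Continuous G)
    (hF_smul : ∀ r : ℝ, 0 < r → ∀ x, F (r • x) = r * F x)
    (hG_smul : ∀ r : ℝ, 0 < r → ∀ x, G (r • x) = r * G x)
    (hG_pos : ∀ x, x ≠ 0 → 0 < G x) :
    ∃ C, ∀ x, F x ≤ C * G x := by
  have hG_ne : ∀ x ∈ Metric.sphere (0 : E) 1, G x ≠ 0 := fun x hx =>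
    (hG_pos x (ne_zero_of_mem_unit_sphere ⟨x, hx⟩)).ne'
  obtain ⟨C, hC⟩ := (isCompact_sphere (0 : E) 1).exists_bound_of_continuousOn
    (hF.continuousOn.div hG.continuousOn hG_ne)
  refine ⟨C, fun x => ?_⟩
  rcases eq_or_ne x 0 with rfl | hx
  · have eq_zero : ∀ H : E → ℝ, (∀ r : ℝ, 0 < r → ∀ x, H (r • x) = r * H x) → H 0 = 0 :=
      fun H hH => by have := hH 2 two_pos 0; rw [smul_zero] at this; linarith
    rw [eq_zero F hF_smul, eq_zero G hG_smul, mul_zero]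
  · have hr : 0 < ‖x‖⁻¹ := inv_pos.2 (norm_pos_iff.2 hx)
    have hbound := (le_abs_self _).trans (hC (‖x‖⁻¹ • x) (by simp [norm_smul, hx]))
    rwa [Pi.div_apply, hF_smul _ hr, hG_smul _ hr, mul_div_mul_left _ _ hr.ne',
      div_le_iff₀ (hG_pos x hx)] at hbound

theorem Polynomial.integral_abs_eval_pos {w : ℝ[X]} (hw : w ≠ 0) {s t : ℝ} (hst : s < t) :
    0 < ∫ ξ in s..t, |w.eval ξ| := by
  rw [intervalIntegral.integral_pos_iff_support_of_nonneg_ae'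
    (ae_of_all _ fun ξ => abs_nonneg _) (w.continuous.abs.intervalIntegrable s t)]
  have hroots : volume {x | w.IsRoot x} = 0 := (finite_setOfPred_isRoot hw).measure_zero _
  have hsupp : Function.support (fun ξ => |w.eval ξ|) ∩ Ioc s t = Ioc s t \ {x | w.IsRoot x} := by
    ext x; simp [and_comm]
  rw [hsupp, measure_sdiff_null hroots, Real.volume_Ioc]
  exact ⟨hst, ENNReal.ofReal_pos.2 (sub_pos.2 hst)⟩

theorem Polynomial.eval_eq_sum_fin {p : ℕ} {w : ℝ[X]} (hw : w.natDegree ≤ p) (ξ : ℝ) :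
    w.eval ξ = ∑ k : Fin (p + 1), w.coeff k * ξ ^ (k : ℕ) := by
  rw [eval_eq_sum_range' (Nat.lt_succ_of_le hw),
    Fin.sum_univ_eq_sum_range (fun k => w.coeff k * ξ ^ k)]

def PolyL2L1Bound (p : ℕ) (s t K : ℝ) : Prop :=
  ∀ w : ℝ[X], w.natDegree ≤ p → √(∫ ξ in s..t, w.eval ξ ^ 2) ≤ K * ∫ ξ in s..t, |w.eval ξ|

theorem eventually_polyL2L1Bound (p : ℕ) {s t : ℝ} (hst : s < t) :
    ∀ᶠ K in atTop, PolyL2L1Bound p s t K := by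
  let ev (c : Fin (p + 1) → ℝ) (ξ : ℝ) : ℝ := ∑ k : Fin (p + 1), c k * ξ ^ (k : ℕ)
  have ev_smul (r : ℝ) (c : Fin (p + 1) → ℝ) (ξ : ℝ) : ev (r • c) ξ = r * ev c ξ := by
    simp only [ev, Pi.smul_apply, smul_eq_mul, Finset.mul_sum, mul_assoc]
  obtain ⟨K₀, hK₀⟩ := exists_le_mul_of_posHomogeneous
    (F := fun c => √(∫ ξ in s..t, ev c ξ ^ 2)) (G := fun c => ∫ ξ in s..t, |ev c ξ|)
    (by fun_prop) (by fun_prop)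
    (fun r hr c => by
      simp only [ev_smul, mul_pow, intervalIntegral.integral_const_mul,
        Real.sqrt_mul (sq_nonneg r), Real.sqrt_sq hr.le])
    (fun r hr c => by
      simp only [ev_smul, abs_mul, abs_of_pos hr, intervalIntegral.integral_const_mul])
    (fun c hc => by
      have hcoeff (j : Fin (p + 1)) : (∑ k : Fin (p + 1), monomial k (c k)).coeff j = c j := by
        simp [coeff_monomial, Fin.val_inj]
      have hw : ∑ k : Fin (p + 1), monomial k (c k) ≠ 0 := fun h0 =>
        hc (by ext j; simpa [h0] using (hcoeff j).symm)
      simpa [ev, eval_finsetSum, eval_monomial] using integral_abs_eval_pos hw hst)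
  refine eventually_atTop.2 ⟨K₀, fun K hK w hw => ?_⟩
  have hev : ∀ ξ, ev (fun k => w.coeff k) ξ = w.eval ξ := fun ξ => (eval_eq_sum_fin hw ξ).symm
  have h := hK₀ fun k => w.coeff k
  simp only [hev] at h
  exact h.trans (by gcongr; exact intervalIntegral.integral_nonneg hst.le fun _ _ => abs_nonneg _)

theorem abs_sub_taylorWithinEval_le_setIntegral {u : ℝ → ℝ} {a b x₀ x : ℝ} {n : ℕ}
    (hu : ContDiffOn ℝ (n + 1) u (Icc a b)) (hx₀ : x₀ ∈ Ioo a b) (hx : x ∈ Ioo a b) :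
    |u x - taylorWithinEval u n (Icc a b) x₀ x| ≤
      |x - x₀| ^ n / n ! * ∫ t in uIoc x₀ x, |iteratedDerivWithin (n + 1) u (Icc a b) t| := by
  set D := iteratedDerivWithin (n + 1) u (Icc a b)
  have hab : a < b := hx.1.trans hx.2
  have hsub : uIcc x₀ x ⊆ Ioo a b := ordConnected_Ioo.uIcc_subset hx₀ hx
  have hD : ContinuousOn D (uIcc x₀ x) :=
    (hu.continuousOn_iteratedDerivWithin le_rfl (uniqueDiffOn_Icc hab)).mono
      (hsub.trans Ioo_subset_Icc_self)
  let g' t := ((n ! : ℝ)⁻¹ * (x - t) ^ n) • D t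
  have hg' : ContinuousOn g' (uIcc x₀ x) := by fun_prop
  have hftc : u x - taylorWithinEval u n (Icc a b) x₀ x = ∫ t in x₀..x, g' t := by
    rw [intervalIntegral.integral_eq_sub_of_hasDerivAt
      (fun t ht => taylorWithinEval_hasDerivAt_Ioo x hab (hsub ht) (hu.of_le (by norm_cast; omega))
        ((hu.differentiableOn_iteratedDerivWithin (by norm_cast; omega)
          (uniqueDiffOn_Icc hab)).mono Ioo_subset_Icc_self))
      hg'.intervalIntegrable, taylorWithinEval_self]
  have hpt : ∀ t ∈ uIoc x₀ x, ‖g' t‖ ≤ |x - x₀| ^ n / n ! * |D t| := by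
    intro t ht
    have hxt : |x - t| ≤ |x - x₀| := abs_sub_right_of_mem_uIcc (uIoc_subset_uIcc ht)
    simp only [g', smul_eq_mul, Real.norm_eq_abs, abs_mul, abs_pow, abs_inv, Nat.abs_cast,
      div_eq_inv_mul]
    gcongr
  rw [hftc, ← Real.norm_eq_abs, ← integral_const_mul]
  refine intervalIntegral.norm_integral_le_integral_norm_uIoc.trans
    (setIntegral_mono_on ?_ ?_ measurableSet_uIoc hpt)
  · exact (hg'.norm.integrableOn_compact isCompact_uIcc).mono_set uIoc_subset_uIcc
  · exact ((continuousOn_const.mul hD.abs).integrableOn_compact isCompact_uIcc).mono_set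
      uIoc_subset_uIcc

theorem exists_polynomial_eval_eq_taylorWithinEval (f : ℝ → ℝ) (n : ℕ) (s : Set ℝ) (x₀ : ℝ) :
    ∃ T : ℝ[X], T.natDegree ≤ n ∧ ∀ x, T.eval x = taylorWithinEval f n s x₀ x := by
  refine ⟨∑ k ∈ Finset.range (n + 1),
    C ((k ! : ℝ)⁻¹ * iteratedDerivWithin k f s x₀) * (X - C x₀) ^ k, ?_, fun x => ?_⟩
  · refine natDegree_sum_le_of_forall_le _ _ fun k hk => (natDegree_C_mul_le _ _).trans ?_
    rw [natDegree_pow, natDegree_X_sub_C, mul_one]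
    exact Finset.mem_range_succ_iff.1 hk
  · simp only [taylor_within_apply, eval_finsetSum, eval_mul, eval_C, eval_pow, eval_sub, eval_X,
      smul_eq_mul]
    exact Finset.sum_congr rfl fun k _ => by ring

theorem exists_polynomial_abs_sub_le_integral {u : ℝ → ℝ} {a b l r : ℝ} {n : ℕ}
    (hu : ContDiffOn ℝ (n + 1) u (Icc a b)) (hlr : l ≤ r) (hsub : Icc l r ⊆ Ioo a b) :
    ∃ T : ℝ[X], T.natDegree ≤ n ∧ ∀ x ∈ Icc l r, |u x - T.eval x| ≤
      (r - l) ^ n / n ! * ∫ t in l..r, |iteratedDerivWithin (n + 1) u (Icc a b) t| := by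
  obtain ⟨T, hTdeg, hT⟩ := exists_polynomial_eval_eq_taylorWithinEval u n (Icc a b) l
  refine ⟨T, hTdeg, fun x hx => ?_⟩
  have hab : a < b := (hsub ⟨le_rfl, hlr⟩).1.trans (hsub ⟨le_rfl, hlr⟩).2
  have hD : IntegrableOn (fun t => |iteratedDerivWithin (n + 1) u (Icc a b) t|) (Ioc l r) :=
    (((hu.continuousOn_iteratedDerivWithin le_rfl (uniqueDiffOn_Icc hab)).abs.mono
      (hsub.trans Ioo_subset_Icc_self)).integrableOn_Icc).mono_set Ioc_subset_Icc_self
  rw [hT, intervalIntegral.integral_of_le hlr]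
  refine (abs_sub_taylorWithinEval_le_setIntegral hu (hsub ⟨le_rfl, hlr⟩) (hsub hx)).trans ?_
  rw [uIoc_of_le hx.1, abs_of_nonneg (sub_nonneg.2 hx.1)]
  gcongr ?_ * ?_
  · gcongr
    exacts [sub_nonneg.2 hx.1, hx.2]
  · exact setIntegral_mono_set hD (ae_of_all _ fun _ => abs_nonneg _)
      (Ioc_subset_Ioc_right hx.2).eventuallyLE

theorem Polynomial.eval_add_eq_sum_iterate_derivative {n : ℕ} {w : ℝ[X]} (hw : w.natDegree ≤ n)
    (x y : ℝ) :
    w.eval (x + y) = ∑ k ∈ Finset.range (n + 1), (derivative^[k] w).eval x / k ! * y ^ k := by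
  rw [add_comm, ← taylor_eval, eval_eq_sum_range' (n := n + 1) (by rw [natDegree_taylor]; omega)]
  refine Finset.sum_congr rfl fun k _ => ?_
  rw [taylor_coeff, ← factorial_smul_hasseDeriv, LinearMap.smul_apply, nsmul_eq_mul, eval_mul,
    eval_natCast, mul_div_cancel_left₀ _ (by positivity)]

theorem fd_Dvec {p : ℕ} {h : ℝ} (hh : h ≠ 0) (xi : ℝ) {ql qr : ℝ[X]} (hql : ql.natDegree ≤ p)
    (hqr : qr.natDegree ≤ p) (ξ : ℝ) :
    fd p (Dvec p h xi ql qr) ξ = (qr - ql).eval (h * ξ + xi) / (2 * h ^ (p + 1)) := by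
  rw [add_comm, eval_add_eq_sum_iterate_derivative
    ((natDegree_sub_le _ _).trans (max_le hqr hql)), fd]
  simp only [Dvec]
  rw [Fin.sum_univ_eq_sum_range (fun k => ((derivative^[k] qr).eval xi -
      (derivative^[k] ql).eval xi) / h ^ (p + 1 - k) / k ! * ξ ^ k), Finset.mul_sum, Finset.sum_div]
  refine Finset.sum_congr rfl fun k hk => ?_
  have hpow : h ^ (p + 1) = h ^ (p + 1 - k) * h ^ k := by
    rw [← pow_add, Nat.sub_add_cancel (Finset.mem_range.1 hk).le]
  rw [iterate_derivative_sub, eval_sub, hpow, mul_pow]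
  field_simp

theorem Qform_le_Qerr {p : ℕ} (d : Fin (p + 1) → ℝ) {v : ℝ[X]} (hv : v.natDegree ≤ p) :
    Qform p d ≤ Qerr p d v := by
  refine csInf_le ⟨0, ?_⟩ ⟨v, hv, rfl⟩
  rintro _ ⟨w, -, rfl⟩
  exact add_nonneg (intervalIntegral.integral_nonneg (by norm_num) fun _ _ => sq_nonneg _)
    (intervalIntegral.integral_nonneg (by norm_num) fun _ _ => sq_nonneg _)

theorem PolyL2L1Bound.mul_sqrt_integral_sq_comp_le {p : ℕ} {s t K : ℝ}
    (hK : PolyL2L1Bound p s t K) {h : ℝ} (hh : 0 < h) (x₀ : ℝ) {w : ℝ[X]} (hw : w.natDegree ≤ p) :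
    h * √(∫ ξ in s..t, w.eval (h * ξ + x₀) ^ 2) ≤
      K * ∫ x in (h * s + x₀)..(h * t + x₀), |w.eval x| := by
  have hdeg : (w.comp (C h * X + C x₀)).natDegree ≤ p :=
    natDegree_comp_le.trans ((Nat.mul_le_mul hw natDegree_linear_le).trans_eq (mul_one p))
  have := hK _ hdeg
  simp only [eval_comp, eval_add, eval_mul, eval_C, eval_X] at this
  rw [intervalIntegral.integral_comp_mul_add (fun x => |w.eval x|) hh.ne', smul_eq_mul] at this
  calc h * √(∫ ξ in s..t, w.eval (h * ξ + x₀) ^ 2)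
      ≤ h * (K * (h⁻¹ * ∫ x in (h * s + x₀)..(h * t + x₀), |w.eval x|)) := by gcongr
    _ = _ := by field_simp

theorem Real.sqrt_add_le_sqrt_add_sqrt {x y : ℝ} (hx : 0 ≤ x) (hy : 0 ≤ y) :
    √(x + y) ≤ √x + √y :=
  Real.sqrt_le_iff.2 ⟨by positivity, by
    nlinarith [Real.sq_sqrt hx, Real.sq_sqrt hy, Real.sqrt_nonneg x, Real.sqrt_nonneg y]⟩

theorem pow_mul_sqrt_Qform_Dvec_le {p : ℕ} {K h : ℝ} (hKl : PolyL2L1Bound p (-(1:ℝ)/2) 0 K)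
    (hKr : PolyL2L1Bound p 0 (1/2) K) (hh : 0 < h) (xi : ℝ) {ql qr T : ℝ[X]}
    (hql : ql.natDegree ≤ p) (hqr : qr.natDegree ≤ p) (hT : T.natDegree ≤ p) :
    h ^ (p + 2) * √(Qform p (Dvec p h xi ql qr)) ≤
      K * ((∫ x in (xi - h/2)..xi, |ql.eval x - T.eval x|) +
        ∫ x in xi..(xi + h/2), |qr.eval x - T.eval x|) := by
  set wl := ql - T
  set wr := qr - T
  have hwl : wl.natDegree ≤ p := (natDegree_sub_le _ _).trans (max_le hql hT)
  have hwr : wr.natDegree ≤ p := (natDegree_sub_le _ _).trans (max_le hqr hT)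
  set Il := ∫ ξ in (-(1:ℝ)/2)..0, wl.eval (h * ξ + xi) ^ 2
  set Ir := ∫ ξ in (0:ℝ)..(1/2), wr.eval (h * ξ + xi) ^ 2
  set v := C (-(2 * h ^ (p + 1))⁻¹) * (wl + wr).comp (C h * X + C xi)
  have hv : v.natDegree ≤ p := (natDegree_C_mul_le _ _).trans <| natDegree_comp_le.trans <|
    (Nat.mul_le_mul (natDegree_add_le_of_degree_le hwl hwr) natDegree_linear_le).trans_eq
      (mul_one p)
  have hQerr : Qerr p (Dvec p h xi ql qr) v = (Il + Ir) / (h ^ (p + 1)) ^ 2 := by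
    have hqrl : qr - ql = wr - wl := by ring
    simp only [Qerr, fd_Dvec hh.ne' xi hql hqr, hqrl, v, eval_mul, eval_C, eval_comp, eval_add,
      eval_sub, eval_X]
    rw [add_div, ← intervalIntegral.integral_div, ← intervalIntegral.integral_div]
    congr 1 <;> refine intervalIntegral.integral_congr fun ξ _ => ?_ <;> field_simp <;> ring
  have hIl : 0 ≤ Il := intervalIntegral.integral_nonneg (by norm_num) fun _ _ => sq_nonneg _
  have hIr : 0 ≤ Ir := intervalIntegral.integral_nonneg (by norm_num) fun _ _ => sq_nonneg _
  have el := hKl.mul_sqrt_integral_sq_comp_le hh xi hwl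
  have er := hKr.mul_sqrt_integral_sq_comp_le hh xi hwr
  rw [show h * (-(1:ℝ)/2) + xi = xi - h/2 by ring, mul_zero, zero_add] at el
  rw [show h * (1/2) + xi = xi + h/2 by ring, mul_zero, zero_add] at er
  calc h ^ (p + 2) * √(Qform p (Dvec p h xi ql qr))
      ≤ h ^ (p + 2) * (√(Il + Ir) / h ^ (p + 1)) := by
        gcongr
        rw [← Real.sqrt_sq (by positivity : 0 ≤ h ^ (p + 1)), ← Real.sqrt_div' _ (by positivity),
          ← hQerr]
        exact Real.sqrt_le_sqrt (Qform_le_Qerr _ hv)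
    _ ≤ h ^ (p + 2) * ((√Il + √Ir) / h ^ (p + 1)) := by
        gcongr; exact Real.sqrt_add_le_sqrt_add_sqrt hIl hIr
    _ = h * √Il + h * √Ir := by field_simp; ring
    _ ≤ _ := by rw [mul_add]; simpa only [Il, Ir, wl, wr, eval_sub] using add_le_add el er

theorem intervalIntegrable_of_eqOn_Ioo {f g : ℝ → ℝ} {α β : ℝ} (hαβ : α ≤ β)
    (hg : ContinuousOn g (Icc α β)) (hfg : EqOn f g (Ioo α β)) : IntervalIntegrable f volume α β :=
  (intervalIntegrable_iff_integrableOn_Ioo_of_le hαβ).2 <|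
    (hg.integrableOn_Icc.mono_set Ioo_subset_Icc_self).congr_fun hfg.symm measurableSet_Ioo

theorem integral_abs_sub_le_of_eqOn_Ioo {u f q T : ℝ → ℝ} {α β M : ℝ} (hαβ : α ≤ β)
    (hu : ContinuousOn u (Icc α β)) (hq : Continuous q) (hT : Continuous T)
    (hf : EqOn f q (Ioo α β)) (huT : ∀ x ∈ Icc α β, |u x - T x| ≤ M) :
    ∫ x in α..β, |q x - T x| ≤ (∫ x in α..β, |u x - f x|) + (β - α) * M := by
  have huq : IntervalIntegrable (fun x => |u x - q x|) volume α β :=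
    ((hu.sub hq.continuousOn).abs).intervalIntegrable_of_Icc hαβ
  have huT' : IntervalIntegrable (fun x => |u x - T x|) volume α β :=
    ((hu.sub hT.continuousOn).abs).intervalIntegrable_of_Icc hαβ
  calc ∫ x in α..β, |q x - T x|
      ≤ ∫ x in α..β, (|u x - q x| + |u x - T x|) :=
        intervalIntegral.integral_mono_on hαβ ((hq.sub hT).abs.intervalIntegrable _ _)
          (huq.add huT') fun x _ => by rw [abs_sub_comm (u x)]; exact abs_sub_le _ _ _
    _ = (∫ x in α..β, |u x - f x|) + ∫ x in α..β, |u x - T x| := by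
        rw [intervalIntegral.integral_add huq huT',
          intervalIntegral.integral_congr_Ioo_of_le (g := fun x => |u x - f x|) hαβ
            fun x hx => by simp only [hf hx]]
    _ ≤ (∫ x in α..β, |u x - f x|) + (β - α) * M := by
        gcongr
        simpa [intervalIntegral.integral_const] using
          intervalIntegral.integral_mono_on hαβ huT' intervalIntegrable_const huT

theorem L1_lower_bound_on_window {p : ℕ} {K h a b xi : ℝ} {u f : ℝ → ℝ} {ql qr : ℝ[X]}
    (hK : 0 < K) (hKl : PolyL2L1Bound p (-(1:ℝ)/2) 0 K) (hKr : PolyL2L1Bound p 0 (1/2) K)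
    (hh : 0 < h) (hu : ContDiffOn ℝ (p + 1) u (Icc a b))
    (hwin : Icc (xi - h/2) (xi + h/2) ⊆ Ioo a b) (hql : ql.natDegree ≤ p)
    (hqr : qr.natDegree ≤ p) (hfl : EqOn f ql.eval (Ioo (xi - h/2) xi))
    (hfr : EqOn f qr.eval (Ioo xi (xi + h/2))) :
    h ^ (p + 1) * (K⁻¹ * (h * √(Qform p (Dvec p h xi ql qr))) -
        (p ! : ℝ)⁻¹ * ∫ x in (xi - h/2)..(xi + h/2), |iteratedDerivWithin (p + 1) u (Icc a b) x|) ≤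
      ∫ x in (xi - h/2)..(xi + h/2), |u x - f x| := by
  set Dw := ∫ x in (xi - h/2)..(xi + h/2), |iteratedDerivWithin (p + 1) u (Icc a b) x|
  obtain ⟨T, hT, huT⟩ := exists_polynomial_abs_sub_le_integral hu (by linarith) hwin
  rw [show xi + h/2 - (xi - h/2) = h by ring] at huT
  have hu' : ContinuousOn u (Icc (xi - h/2) (xi + h/2)) :=
    hu.continuousOn.mono (hwin.trans Ioo_subset_Icc_self)
  have hul : ContinuousOn u (Icc (xi - h/2) xi) := hu'.mono (Icc_subset_Icc_right (by linarith))
  have hur : ContinuousOn u (Icc xi (xi + h/2)) := hu'.mono (Icc_subset_Icc_left (by linarith))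
  have hl := integral_abs_sub_le_of_eqOn_Ioo (by linarith) hul ql.continuous T.continuous hfl
    fun x hx => huT x ⟨hx.1, by linarith [hx.2]⟩
  have hr := integral_abs_sub_le_of_eqOn_Ioo (by linarith) hur qr.continuous T.continuous hfr
    fun x hx => huT x ⟨by linarith [hx.1], hx.2⟩
  have hsplit := intervalIntegral.integral_add_adjacent_intervals (f := fun x => |u x - f x|)
    (intervalIntegrable_of_eqOn_Ioo (by linarith) (hul.sub ql.continuous.continuousOn).abs
      fun x hx => by simp only [hfl hx, Pi.sub_apply])
    (intervalIntegrable_of_eqOn_Ioo (by linarith) (hur.sub qr.continuous.continuousOn).abs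
      fun x hx => by simp only [hfr hx, Pi.sub_apply])
  have hQ := pow_mul_sqrt_Qform_Dvec_le hKl hKr hh xi hql hqr hT
  calc h ^ (p + 1) * (K⁻¹ * (h * √(Qform p (Dvec p h xi ql qr))) - (p ! : ℝ)⁻¹ * Dw)
      = K⁻¹ * (h ^ (p + 2) * √(Qform p (Dvec p h xi ql qr))) - h * (h ^ p / p ! * Dw) := by ring
    _ ≤ K⁻¹ * (K * ((∫ x in (xi - h/2)..xi, |u x - f x|) + (xi - (xi - h/2)) * (h ^ p / p ! * Dw)
        + ((∫ x in xi..(xi + h/2), |u x - f x|) + (xi + h/2 - xi) * (h ^ p / p ! * Dw))))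
        - h * (h ^ p / p ! * Dw) := by
          gcongr ?_ - _
          exact mul_le_mul_of_nonneg_left (hQ.trans (by gcongr)) (inv_nonneg.2 hK.le)
    _ = _ := by rw [← hsplit]; field_simp; ring

section Mesh

variable {a h : ℝ} {N i : ℕ}

theorem Icc_cell_subset (hh : 0 ≤ h) (hi : i < N) :
    Icc (a + i * h) (a + (i + 1) * h) ⊆ Icc a (a + N * h) := by
  have : (i : ℝ) + 1 ≤ N := by exact_mod_cast hi
  exact Icc_subset_Icc (by nlinarith) (by nlinarith)

theorem Icc_window_subset_Ioo (hh : 0 < h) (hi : i ∈ Finset.Ico 1 N) :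
    Icc (a + i * h - h/2) (a + i * h + h/2) ⊆ Ioo a (a + N * h) := by
  obtain ⟨hi1, hiN⟩ := Finset.mem_Ico.1 hi
  have hi1' : (1 : ℝ) ≤ i := by exact_mod_cast hi1
  have hiN' : (i : ℝ) + 1 ≤ N := by exact_mod_cast hiN
  exact fun x hx => ⟨by nlinarith [hx.1], by nlinarith [hx.2]⟩

theorem Ioo_left_half_window_subset (hh : 0 ≤ h) (hi : 1 ≤ i) :
    Ioo (a + i * h - h/2) (a + i * h) ⊆ Ioo (a + (i - 1 : ℕ) * h) (a + ((i - 1 : ℕ) + 1) * h) := by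
  rw [Nat.cast_sub hi, Nat.cast_one, sub_add_cancel]
  exact fun x hx => ⟨by linarith [hx.1], hx.2⟩

theorem Ioo_right_half_window_subset (hh : 0 ≤ h) :
    Ioo (a + i * h) (a + i * h + h/2) ⊆ Ioo (a + i * h) (a + (i + 1) * h) :=
  fun x hx => ⟨hx.1, by linarith [hx.2]⟩

end Mesh

theorem intervalIntegrable_of_eqOn_cells {f : ℝ → ℝ} {g : ℕ → ℝ → ℝ} {a h : ℝ} {N : ℕ}
    (hh : 0 ≤ h) (hg : ∀ i < N, ContinuousOn (g i) (Icc (a + i * h) (a + (i + 1) * h)))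
    (hfg : ∀ i < N, EqOn f (g i) (Ioo (a + i * h) (a + (i + 1) * h))) :
    IntervalIntegrable f volume a (a + N * h) := by
  simpa using IntervalIntegrable.trans_iterate (a := fun k : ℕ => a + k * h) fun k hk =>
    intervalIntegrable_of_eqOn_Ioo (by push_cast; linarith) (by push_cast; exact hg k hk)
      (by push_cast; exact hfg k hk)

theorem sum_integral_window_le {f : ℝ → ℝ} {a h : ℝ} {N : ℕ} (hh : 0 ≤ h) (hf0 : 0 ≤ f)
    (hf : IntervalIntegrable f volume a (a + N * h)) :
    ∑ i ∈ Finset.Ico 1 N, ∫ x in (a + i * h - h/2)..(a + i * h + h/2), f x ≤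
      ∫ x in a..(a + N * h), f x := by
  rcases N with _ | N
  · simp
  let z : ℕ → ℝ := fun k => a + h/2 + k * h
  have hmem : ∀ k ≤ N, z k ∈ uIcc a (a + (N + 1 : ℕ) * h) := fun k hk => by
    have : (k : ℝ) ≤ N := by exact_mod_cast hk
    refine mem_uIcc_of_le ?_ ?_ <;> simp only [z] <;> push_cast <;> nlinarith
  have hz : ∀ k < N, IntervalIntegrable f volume (z k) (z (k + 1)) := fun k hk =>
    hf.mono_set (uIcc_subset_uIcc (hmem k hk.le) (hmem (k + 1) hk))
  calc ∑ i ∈ Finset.Ico 1 (N + 1), ∫ x in (a + i * h - h/2)..(a + i * h + h/2), f x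
      = ∑ k ∈ Finset.range N, ∫ x in z k..z (k + 1), f x := by
        rw [Finset.sum_Ico_eq_sum_range, Nat.add_sub_cancel]
        refine Finset.sum_congr rfl fun k _ => ?_
        congr 1 <;> simp only [z] <;> push_cast <;> ring
    _ = ∫ x in z 0..z N, f x := intervalIntegral.sum_integral_adjacent_intervals hz
    _ ≤ ∫ x in a..(a + (N + 1 : ℕ) * h), f x := by
        have h0 := hmem 0 (Nat.zero_le _)
        have hN := hmem N le_rfl
        rw [uIcc_of_le (by push_cast; nlinarith)] at h0 hN
        exact intervalIntegral.integral_mono_interval h0.1 (by simp only [z]; nlinarith) hN.2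
          (ae_of_all _ hf0) hf

/-- Theorem 3 of the paper, L¹ lower bound:
`‖u - u^R‖_{L¹} ≥ h^{p+1} [ C₁₂ Σᵢ h √(Q(Dᵢ)) - C₁ |u|_{W^{p+1}_1} ]`. -/
theorem L1_lower_bound (p : ℕ) :
    ∃ C₁ C₁₂ : ℝ, 0 < C₁ ∧ 0 < C₁₂ ∧
      ∀ (a b : ℝ), a < b → ∀ N : ℕ, 0 < N → ∀ h : ℝ, h = (b - a) / N →
      ∀ u : ℝ → ℝ, ContDiffOn ℝ (p+1) u (Set.Icc a b) →
      ∀ (uR : ℝ → ℝ) (q : ℕ → Polynomial ℝ),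
        (∀ i < N, (q i).natDegree ≤ p) →
        (∀ i < N, ∀ x ∈ Set.Ioo (a + i*h) (a + (i+1)*h), uR x = (q i).eval x) →
        (∫ x in a..b, |u x - uR x|) ≥
          h^(p+1) *
            (C₁₂ * ∑ i ∈ Finset.Ico 1 N,
                h * Real.sqrt (Qform p (Dvec p h (a + i*h) (q (i-1)) (q i)))
              - C₁ * ∫ x in a..b, |iteratedDerivWithin (p+1) u (Set.Icc a b) x|) := by
  obtain ⟨K, hK, hKl, hKr⟩ := ((eventually_gt_atTop 0).and
    ((eventually_polyL2L1Bound p (by norm_num : -(1:ℝ)/2 < 0)).and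
      (eventually_polyL2L1Bound p (by norm_num : (0:ℝ) < 1/2)))).exists
  refine ⟨(p ! : ℝ)⁻¹, K⁻¹, by positivity, inv_pos.2 hK, ?_⟩
  intro a b hab N hN h hh_def u hu uR q hq huR
  have hh : 0 < h := hh_def ▸ div_pos (sub_pos.2 hab) (Nat.cast_pos.2 hN)
  have hb : a + N * h = b := by rw [hh_def]; field_simp; ring
  set D := iteratedDerivWithin (p + 1) u (Icc a b)
  have hnode := fun i (hi : i ∈ Finset.Ico 1 N) => L1_lower_bound_on_window hK hKl hKr hh hu
    (hb ▸ Icc_window_subset_Ioo hh hi) (hq _ (by grind)) (hq i (by grind))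
    (fun x hx => huR _ (by grind) x (Ioo_left_half_window_subset hh.le (Finset.mem_Ico.1 hi).1 hx))
    (fun x hx => huR i (by grind) x (Ioo_right_half_window_subset hh.le hx))
  have hDint : IntervalIntegrable (fun x => |D x|) volume a (a + N * h) := by
    rw [hb]
    exact ((hu.continuousOn_iteratedDerivWithin le_rfl (uniqueDiffOn_Icc hab)).abs
      ).intervalIntegrable_of_Icc hab.le
  have huRint : IntervalIntegrable (fun x => |u x - uR x|) volume a (a + N * h) :=
    intervalIntegrable_of_eqOn_cells hh.le
      (fun i hi => ((hu.continuousOn.mono (hb ▸ Icc_cell_subset hh.le hi)).sub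
        (q i).continuous.continuousOn).abs)
      (fun i hi x hx => by simp only [huR i hi x hx, Pi.sub_apply])
  have hwD := sum_integral_window_le hh.le (fun x => abs_nonneg (D x)) hDint
  have hwU := sum_integral_window_le hh.le (fun x => abs_nonneg (u x - uR x)) huRint
  rw [hb] at hwD hwU
  have hsum : h ^ (p + 1) * (K⁻¹ * ∑ i ∈ Finset.Ico 1 N,
        h * √(Qform p (Dvec p h (a + i * h) (q (i - 1)) (q i))) - (p ! : ℝ)⁻¹ *
          ∑ i ∈ Finset.Ico 1 N, ∫ x in (a + i * h - h/2)..(a + i * h + h/2), |D x|) ≤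
      ∑ i ∈ Finset.Ico 1 N, ∫ x in (a + i * h - h/2)..(a + i * h + h/2), |u x - uR x| := by
    simpa only [mul_sub, Finset.mul_sum, Finset.sum_sub_distrib] using Finset.sum_le_sum hnode
  have hD := mul_le_mul_of_nonneg_left hwD (by positivity : 0 ≤ h ^ (p + 1) * (p ! : ℝ)⁻¹)
  rw [ge_iff_le]
  linarith
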